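/- Let C = {C_1,…,C_k} be a clustering of a finite set X ⊆ ℝ^m with centers μ_i and radii r(C_i), satisfying the γ-margin property, and let ε ≥ 0 with γ ≥ 1 + 2ε. Let μ' ∈ ℝ^m satisfy d(μ', μ_i) ≤ ε·r(C_i), and let S be a set with C_i ⊆ S ⊆ X and S \ C_i nonempty. Define r' = min_{y ∈ S \ C_i} d(y, μ'). Then {x ∈ S : d(x, μ') < r'} = C_i. (This is the correctness of the threshold radius found by binary search over the points of S sorted by distance to the empirical center μ'.) -/

import Mathlib

open Finset
open scoped Classical

/-- The center (mean) of a finite cluster of points in Euclidean space. -/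
noncomputable def ctr {m : ℕ} (C : Finset (EuclideanSpace ℝ (Fin m))) : EuclideanSpace ℝ (Fin m) :=
  (C.card : ℝ)⁻¹ • ∑ x ∈ C, x

/-- The radius of a cluster: the maximal distance of a member to the center. -/
noncomputable def rad {m : ℕ} (C : Finset (EuclideanSpace ℝ (Fin m))) : ℝ :=
  sSup ((fun x => dist x (ctr C)) '' (C : Set (EuclideanSpace ℝ (Fin m))))

/-- Confusion predicate for the (ν, ρ) local distance-weak oracle. -/
def LocalConfused {m k : ℕ} (Cl : Fin k → Finset (EuclideanSpace ℝ (Fin m))) (ν ρ : ℝ)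
    (x y : EuclideanSpace ℝ (Fin m)) : Prop :=
  (∃ i j, i ≠ j ∧ x ∈ Cl i ∧ y ∈ Cl j ∧
    dist x y < (ν - 1) * min (dist x (ctr (Cl i))) (dist y (ctr (Cl j)))) ∨
  (∃ i, x ∈ Cl i ∧ y ∈ Cl i ∧ 2 * ρ * rad (Cl i) < dist x y)

/-- Confusion predicate for the ρ global distance-weak oracle. -/
def GlobalConfused {m k : ℕ} (Cl : Fin k → Finset (EuclideanSpace ℝ (Fin m))) (ρ : ℝ)
    (x y : EuclideanSpace ℝ (Fin m)) : Prop :=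
  (∃ i j, i ≠ j ∧ x ∈ Cl i ∧ y ∈ Cl j ∧
    (ρ * rad (Cl i) < dist x (ctr (Cl i)) ∨ ρ * rad (Cl j) < dist y (ctr (Cl j)))) ∨
  (∃ i, x ∈ Cl i ∧ y ∈ Cl i ∧ 2 * ρ * rad (Cl i) < dist x y)

/-- Two points lie in the same cluster. -/
def SameCluster {m k : ℕ} (Cl : Fin k → Finset (EuclideanSpace ℝ (Fin m)))
    (x y : EuclideanSpace ℝ (Fin m)) : Prop :=
  ∃ i, x ∈ Cl i ∧ y ∈ Cl i

/-- The truthful (ν, ρ) local distance-weak oracle: answers 0 on confused pairs,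
1 on same-cluster non-confused pairs, and -1 on different-cluster non-confused pairs. -/
noncomputable def localQ {m k : ℕ} (Cl : Fin k → Finset (EuclideanSpace ℝ (Fin m))) (ν ρ : ℝ)
    (x y : EuclideanSpace ℝ (Fin m)) : ℤ :=
  if LocalConfused Cl ν ρ x y then 0 else if SameCluster Cl x y then 1 else -1

/-- The truthful ρ global distance-weak oracle. -/
noncomputable def globalQ {m k : ℕ} (Cl : Fin k → Finset (EuclideanSpace ℝ (Fin m))) (ρ : ℝ)
    (x y : EuclideanSpace ℝ (Fin m)) : ℤ :=
  if GlobalConfused Cl ρ x y then 0 else if SameCluster Cl x y then 1 else -1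

/-!
Every point of `C_i` lies within `(1 + ε) r` of `μ'`, where `r = r(C_i)` is attained by some
point of `C_i`. Applying the margin to that extremal point, every other point of `S` lies beyond
`γ r - ε r ≥ (1 + ε) r` from `μ'`. So each point of `C_i` is strictly closer to `μ'` than each
point of `S \ C_i`, and the threshold `r'` separates the two.
-/

theorem Finset.filter_lt_inf'_sdiff_eq {α β : Type*} [DecidableEq α] [LinearOrder β]
    {S T : Finset α} (hTS : T ⊆ S) (hdiff : (S \ T).Nonempty) {f : α → β}
    (hsep : ∀ x ∈ T, ∀ y ∈ S \ T, f x < f y) :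
    S.filter (fun x => f x < (S \ T).inf' hdiff f) = T := by
  ext x
  rw [mem_filter]
  constructor
  · rintro ⟨hxS, hlt⟩
    by_contra hxT
    exact (hlt.trans_le (inf'_le f (mem_sdiff.mpr ⟨hxS, hxT⟩))).false
  · intro hxT
    exact ⟨hTS hxT, (lt_inf'_iff hdiff).mpr (hsep x hxT)⟩

section Radius

variable {m : ℕ} {C : Finset (EuclideanSpace ℝ (Fin m))}

theorem dist_ctr_le_rad {x : EuclideanSpace ℝ (Fin m)} (hx : x ∈ C) :
    dist x (ctr C) ≤ rad C :=
  le_csSup ((C.finite_toSet.image _).bddAbove) ⟨x, hx, rfl⟩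

theorem exists_dist_ctr_eq_rad (hC : C.Nonempty) :
    ∃ x ∈ C, dist x (ctr C) = rad C :=
  (hC.to_set.image _).csSup_mem (C.finite_toSet.image _)

end Radius

theorem dist_lt_dist_of_margin {E : Type*} [PseudoMetricSpace E] {x y μ μ' : E} {r γ ε : ℝ}
    (hx : dist x μ ≤ r) (hy : γ * r < dist y μ) (hμ' : dist μ' μ ≤ ε * r)
    (hγε : 1 + 2 * ε ≤ γ) :
    dist x μ' < dist y μ' := by
  have hr : 0 ≤ r := dist_nonneg.trans hx
  have hx' : dist x μ' ≤ dist x μ + dist μ' μ := dist_triangle_right x μ' μ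
  have hy' : dist y μ ≤ dist y μ' + dist μ' μ := dist_triangle y μ' μ
  nlinarith [mul_le_mul_of_nonneg_right hγε hr]

theorem stmt6_general {m k : ℕ} (X : Finset (EuclideanSpace ℝ (Fin m)))
    (Cl : Fin k → Finset (EuclideanSpace ℝ (Fin m)))
    (γ : ℝ)
    (hmargin : ∀ i, ∀ x ∈ Cl i, ∀ y ∈ X, y ∉ Cl i →
      γ * dist x (ctr (Cl i)) < dist y (ctr (Cl i)))
    (ε : ℝ) (hγε : 1 + 2 * ε ≤ γ)
    (i : Fin k) (μ' : EuclideanSpace ℝ (Fin m))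
    (hμ' : dist μ' (ctr (Cl i)) ≤ ε * rad (Cl i))
    (S : Finset (EuclideanSpace ℝ (Fin m))) (hCS : Cl i ⊆ S) (hSX : S ⊆ X)
    (hdiff : (S \ Cl i).Nonempty) :
    S.filter (fun x => dist x μ' < (S \ Cl i).inf' hdiff (fun y => dist y μ')) = Cl i := by
  refine Finset.filter_lt_inf'_sdiff_eq hCS hdiff fun x hx y hy => ?_
  obtain ⟨hyS, hyC⟩ := mem_sdiff.mp hy
  obtain ⟨z, hz, hz_rad⟩ := exists_dist_ctr_eq_rad ⟨x, hx⟩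
  have hy_far : γ * rad (Cl i) < dist y (ctr (Cl i)) :=
    hz_rad ▸ hmargin i z hz y (hSX hyS) hyC
  exact dist_lt_dist_of_margin (dist_ctr_le_rad hx) hy_far hμ' hγε

/-- Under the γ-margin property with γ ≥ 1 + 2ε, if μ' satisfies
d(μ', μ_i) ≤ ε·r(C_i), C_i ⊆ S ⊆ X and S \ C_i is nonempty, then with
r' = min_{y ∈ S \ C_i} d(y, μ') one has {x ∈ S : d(x, μ') < r'} = C_i. -/
theorem stmt6 {m k : ℕ} (X : Finset (EuclideanSpace ℝ (Fin m)))
    (Cl : Fin k → Finset (EuclideanSpace ℝ (Fin m)))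
    (hsub : ∀ i, Cl i ⊆ X) (hne : ∀ i, (Cl i).Nonempty)
    (hpart : ∀ x ∈ X, ∃! i, x ∈ Cl i)
    (γ : ℝ) (hγ : 1 ≤ γ)
    (hmargin : ∀ i, ∀ x ∈ Cl i, ∀ y ∈ X, y ∉ Cl i →
      γ * dist x (ctr (Cl i)) < dist y (ctr (Cl i)))
    (ε : ℝ) (hε : 0 ≤ ε) (hγε : 1 + 2 * ε ≤ γ)
    (i : Fin k) (μ' : EuclideanSpace ℝ (Fin m))
    (hμ' : dist μ' (ctr (Cl i)) ≤ ε * rad (Cl i))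
    (S : Finset (EuclideanSpace ℝ (Fin m))) (hCS : Cl i ⊆ S) (hSX : S ⊆ X)
    (hdiff : (S \ Cl i).Nonempty) :
    S.filter (fun x => dist x μ' < (S \ Cl i).inf' hdiff (fun y => dist y μ')) = Cl i :=
  stmt6_general X Cl γ hmargin ε hγε i μ' hμ' S hCS hSX hdiff
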